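/- Let $\mathcal{S}$ be a collection of cubes in $\mathbb{R}^n$ that is sparse in the sense that there exist pairwise disjoint measurable subsets $\mathcal{E}(I) \subseteq I$ for $I \in \mathcal{S}$ with $|\mathcal{E}(I)| \geq c |I|$ for some fixed $c > 0$. Then for all nonnegative $f, g \in L^2(\mathbb{R}^n)$, $\sum_{I \in \mathcal{S}} |I| \cdot \left(|I|^{-1}\int_{5I} f\right) \left(|I|^{-1}\int_I g\right) \leq C_{c,n} \|f\|_{L^2} \|g\|_{L^2}$. -/

import Mathlib

/-!
Cubes are closed balls for the sup metric, and `|E(I)| ≥ c |I|`, `|5I| = 5ⁿ |I|` bound each term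
by `5ⁿ c⁻¹ ⟨f⟩_{5I} ⟨g⟩_I |E(I)|`. By Cauchy–Schwarz in the sum it then suffices to prove the
Carleson embedding `∑_I ⟨F⟩_{B_I}² |E(I)| ≲ ‖F‖₂²` for disjoint `E(I) ⊆ B_I` (the left side is
`∫ (MF)²` over `⋃ E(I)`, which replaces the maximal function). Group the balls by the dyadic size
`⟨F⟩_{B_I} > 2^(k+1)` of their averages. On such a ball the truncation `F·1_{F > 2^k}` still has
average above `2^k`, so the Vitali covering lemma gives `2^k |⋃ B_I| ≲ ∫_{F > 2^k} F`, and the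
disjoint `E(I)` of level `k` have total measure at most `|⋃ B_I|`. As `a² ≤ 16 ∑_{2^(k+1) < a} 4^k`,
summing `4^k` times this over `k` leaves `∫ F · ∑_{2^k < F} 2^k ≤ 2 ∫ F²`.
-/

open MeasureTheory
open scoped ENNReal

/-- The cube with center `c` and half side length `r`. -/
def centeredCube (n : ℕ) (c : Fin n → ℝ) (r : ℝ) : Set (Fin n → ℝ) :=
  {y | ∀ i, |y i - c i| ≤ r}

open Metric Set Function
open scoped NNReal

theorem ENNReal.tsum_ite_le_two_zpow_eq (K : ℤ) :
    ∑' k : ℤ, (if k ≤ K then (2 : ℝ≥0∞) ^ k else 0) = 2 ^ (K + 1) := by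
  have hinj : Injective (fun m : ℕ => K - m) := fun m m' h => by simpa using h
  have hsupp : support (fun k : ℤ => if k ≤ K then (2 : ℝ≥0∞) ^ k else 0) ⊆
      range (fun m : ℕ => K - m) := by
    intro k hk
    have : k ≤ K := by by_contra h; simp [h] at hk
    exact ⟨(K - k).toNat, show K - ((K - k).toNat : ℤ) = k by omega⟩
  rw [← hinj.tsum_eq hsupp]
  calc ∑' m : ℕ, (if K - m ≤ K then (2 : ℝ≥0∞) ^ (K - m) else 0)
      = ∑' m : ℕ, 2 ^ (K + 1) * 2 ^ (-1 - m : ℤ) := by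
        refine tsum_congr fun m => ?_
        rw [if_pos (by omega), ← ENNReal.zpow_add two_ne_zero ofNat_ne_top]
        ring_nf
    _ = 2 ^ (K + 1) := by rw [ENNReal.tsum_mul_left, ENNReal.tsum_two_zpow_neg_add_one, mul_one]

theorem ENNReal.tsum_ite_two_zpow_lt_le_two_mul (a : ℝ≥0∞) :
    ∑' k : ℤ, (if (2 : ℝ≥0∞) ^ k < a then (2 : ℝ≥0∞) ^ k else 0) ≤ 2 * a := by
  rcases eq_or_ne a 0 with rfl | ha0
  · simp
  rcases eq_or_ne a ⊤ with rfl | hat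
  · simp [ENNReal.mul_top]
  obtain ⟨K, hKa, haK⟩ := ENNReal.exists_mem_Ioc_zpow ha0 hat one_lt_two ofNat_ne_top
  calc _ ≤ ∑' k : ℤ, (if k ≤ K then (2 : ℝ≥0∞) ^ k else 0) := by
        refine ENNReal.tsum_le_tsum fun k => ?_
        split_ifs with hk hkK <;> try simp
        exact absurd (haK.trans (ENNReal.zpow_le_of_le one_le_two (by omega))) (not_le.2 hk)
    _ = 2 * 2 ^ K := by
        rw [ENNReal.tsum_ite_le_two_zpow_eq, ENNReal.zpow_add two_ne_zero ofNat_ne_top, zpow_one,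
          mul_comm]
    _ ≤ 2 * a := by gcongr

theorem ENNReal.tsum_sq_two_zpow_eq_top :
    ∑' k : ℤ, ((2 : ℝ≥0∞) ^ k) ^ 2 = ⊤ := by
  refine top_le_iff.1 ?_
  calc (⊤ : ℝ≥0∞) = ∑' _ : ℕ, 1 := (ENNReal.tsum_const_eq_top_of_ne_zero one_ne_zero).symm
    _ ≤ ∑' m : ℕ, ((2 : ℝ≥0∞) ^ (m : ℤ)) ^ 2 :=
        ENNReal.tsum_le_tsum fun m => by rw [zpow_natCast, ← pow_mul]; exact one_le_pow₀ one_le_two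
    _ ≤ ∑' k : ℤ, ((2 : ℝ≥0∞) ^ k) ^ 2 :=
        ENNReal.tsum_comp_le_tsum_of_injective Nat.cast_injective _

theorem ENNReal.sq_le_sixteen_mul_tsum (a : ℝ≥0∞) :
    a ^ 2 ≤ 16 * ∑' k : ℤ, (if (2 : ℝ≥0∞) ^ (k + 1) < a then ((2 : ℝ≥0∞) ^ k) ^ 2 else 0) := by
  rcases eq_or_ne a 0 with rfl | ha0
  · simp
  rcases eq_or_ne a ⊤ with rfl | hat
  · simp only [ENNReal.zpow_lt_top two_ne_zero ofNat_ne_top, if_true,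
      ENNReal.tsum_sq_two_zpow_eq_top]
    simp
  obtain ⟨K, hKa, haK⟩ := ENNReal.exists_mem_Ioc_zpow ha0 hat one_lt_two ofNat_ne_top
  have hterm : a ^ 2 ≤ 16 * ((2 : ℝ≥0∞) ^ (K - 1)) ^ 2 := by
    have : (2 : ℝ≥0∞) ^ (K + 1) = 4 * 2 ^ (K - 1) := by
      rw [show K + 1 = (K - 1) + 2 by ring, ENNReal.zpow_add two_ne_zero ofNat_ne_top]
      norm_num [mul_comm]
    calc a ^ 2 ≤ (4 * (2 : ℝ≥0∞) ^ (K - 1)) ^ 2 := by gcongr; rwa [← this]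
      _ = 16 * ((2 : ℝ≥0∞) ^ (K - 1)) ^ 2 := by ring
  refine hterm.trans ?_
  gcongr
  refine le_trans (le_of_eq ?_) (ENNReal.le_tsum (K - 1))
  rw [if_pos (by simpa using hKa)]

theorem ENNReal.tsum_mul_le_Lp_mul_Lq {ι : Type*} (f g : ι → ℝ≥0∞) {p q : ℝ}
    (hpq : p.HolderConjugate q) :
    ∑' i, f i * g i ≤ (∑' i, f i ^ p) ^ (1 / p) * (∑' i, g i ^ q) ^ (1 / q) := by
  rw [ENNReal.tsum_eq_iSup_sum]
  refine iSup_le fun s => (ENNReal.inner_le_Lp_mul_Lq s f g hpq).trans ?_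
  have := hpq.pos
  have := hpq.symm.pos
  gcongr <;> exact ENNReal.sum_le_tsum s

theorem ENNReal.tsum_mul_mul_le_rpow_half_mul {κ : Type*} (a b w : κ → ℝ≥0∞) :
    ∑' i, a i * b i * w i ≤
      (∑' i, a i ^ 2 * w i) ^ (1 / 2 : ℝ) * (∑' i, b i ^ 2 * w i) ^ (1 / 2 : ℝ) := by
  have hsq (x y : ℝ≥0∞) : (x * y ^ (1 / 2 : ℝ)) ^ (2 : ℝ) = x ^ 2 * y := by
    rw [ENNReal.mul_rpow_of_nonneg _ _ zero_le_two, ← ENNReal.rpow_mul, ENNReal.rpow_two]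
    norm_num
  have hw (i : κ) : w i = w i ^ (1 / 2 : ℝ) * w i ^ (1 / 2 : ℝ) := by
    rw [← ENNReal.rpow_add_of_nonneg _ _ (by norm_num) (by norm_num)]; norm_num
  calc ∑' i, a i * b i * w i
      = ∑' i, (a i * w i ^ (1 / 2 : ℝ)) * (b i * w i ^ (1 / 2 : ℝ)) :=
        tsum_congr fun i => by rw [mul_mul_mul_comm, ← hw i]
    _ ≤ _ := by
        simpa only [hsq] using ENNReal.tsum_mul_le_Lp_mul_Lq (fun i => a i * w i ^ (1 / 2 : ℝ))
          (fun i => b i * w i ^ (1 / 2 : ℝ)) Real.HolderConjugate.two_two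

theorem ENNReal.rpow_half_mul_rpow_half_le {A P Q X Y : ℝ≥0∞} (hX : X ≤ A * P) (hY : Y ≤ A * Q) :
    X ^ (1 / 2 : ℝ) * Y ^ (1 / 2 : ℝ) ≤ A * (P ^ (1 / 2 : ℝ) * Q ^ (1 / 2 : ℝ)) := by
  calc X ^ (1 / 2 : ℝ) * Y ^ (1 / 2 : ℝ) ≤ (A * P) ^ (1 / 2 : ℝ) * (A * Q) ^ (1 / 2 : ℝ) := by
        gcongr
    _ = (A ^ (1 / 2 : ℝ) * A ^ (1 / 2 : ℝ)) * (P ^ (1 / 2 : ℝ) * Q ^ (1 / 2 : ℝ)) := by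
        rw [ENNReal.mul_rpow_of_nonneg _ _ (by norm_num),
          ENNReal.mul_rpow_of_nonneg _ _ (by norm_num)]
        ring
    _ = A * (P ^ (1 / 2 : ℝ) * Q ^ (1 / 2 : ℝ)) := by
        rw [← ENNReal.mul_rpow_of_nonneg _ _ (by norm_num), ← sq, ← ENNReal.rpow_natCast,
          ← ENNReal.rpow_mul]
        norm_num

section

variable {α : Type*} [MeasurableSpace α] {μ : Measure α}

theorem mul_measure_le_setLIntegral_indicator_lt {s : Set α} (hs : μ s ≠ ⊤) {F : α → ℝ≥0∞}
    {ℓ : ℝ≥0∞} (hℓ : ℓ ≠ ⊤) (h : 2 * ℓ * μ s ≤ ∫⁻ y in s, F y ∂μ) :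
    ℓ * μ s ≤ ∫⁻ y in s, {y | ℓ < F y}.indicator F y ∂μ := by
  have htrunc : ∫⁻ y in s, F y ∂μ ≤ (∫⁻ y in s, {y | ℓ < F y}.indicator F y ∂μ) + ℓ * μ s := by
    calc ∫⁻ y in s, F y ∂μ ≤ ∫⁻ y in s, ({y | ℓ < F y}.indicator F y + ℓ) ∂μ := by
          refine lintegral_mono fun y => ?_
          by_cases hy : ℓ < F y
          · simp [hy]
          · simpa [hy] using not_lt.1 hy
      _ = _ := by rw [lintegral_add_right _ measurable_const, setLIntegral_const]
  refine (ENNReal.add_le_add_iff_right (ENNReal.mul_ne_top hℓ hs)).1 ?_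
  calc ℓ * μ s + ℓ * μ s = 2 * ℓ * μ s := by ring
    _ ≤ _ := h.trans htrunc

theorem tsum_indicator_measure_le_measure_biUnion {ι : Type*} [Countable ι] {E B : ι → Set α}
    (hEm : ∀ i, MeasurableSet (E i)) (hEB : ∀ i, E i ⊆ B i) (hEd : Pairwise (Disjoint on E))
    (t : Set ι) :
    ∑' i, t.indicator (fun i => μ (E i)) i ≤ μ (⋃ i ∈ t, B i) := by
  rw [← tsum_subtype, ← measure_biUnion t.to_countable (fun i _ j _ hij => hEd hij)
    (fun i _ => hEm i)]
  exact measure_mono (biUnion_mono subset_rfl fun i _ => hEB i)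

end

section Doubling

variable {α ι : Type*} [PseudoMetricSpace α] [MeasurableSpace α] [OpensMeasurableSpace α]
  {μ : Measure α} {K : ℝ≥0∞} {c : ι → α} {r : ι → ℝ} {F : α → ℝ≥0∞} {ℓ : ℝ≥0∞}

theorem mul_measure_biUnion_closedBall_le_of_finite
    (hμ : ∀ x r, μ (closedBall x (4 * r)) ≤ K * μ (closedBall x r)) {t : Set ι} (ht : t.Finite)
    (h : ∀ i ∈ t, ℓ * μ (closedBall (c i) (r i)) ≤ ∫⁻ y in closedBall (c i) (r i), F y ∂μ) :
    ℓ * μ (⋃ i ∈ t, closedBall (c i) (r i)) ≤ K * ∫⁻ y, F y ∂μ := by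
  obtain ⟨R, hR⟩ := (ht.image r).bddAbove
  obtain ⟨u, hut, hud, hcov⟩ := Vitali.exists_disjoint_subfamily_covering_enlargement_closedBall
    t c r R (fun i hi => hR (mem_image_of_mem r hi)) 4 (by norm_num)
  have hu : u.Countable := (ht.subset hut).countable
  calc ℓ * μ (⋃ i ∈ t, closedBall (c i) (r i))
      ≤ ℓ * μ (⋃ j ∈ u, closedBall (c j) (4 * r j)) := by
        gcongr ℓ * μ ?_
        refine iUnion₂_subset fun i hi => ?_
        obtain ⟨j, hj, hij⟩ := hcov i hi
        exact hij.trans (subset_biUnion_of_mem (u := fun j => closedBall (c j) (4 * r j)) hj)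
    _ ≤ ℓ * ∑' j : u, μ (closedBall (c j) (4 * r j)) := by
        gcongr; exact measure_biUnion_le _ hu _
    _ ≤ ℓ * ∑' j : u, K * μ (closedBall (c j) (r j)) := by
        gcongr; exact hμ _ _
    _ = K * ∑' j : u, ℓ * μ (closedBall (c j) (r j)) := by
        rw [ENNReal.tsum_mul_left, ENNReal.tsum_mul_left]; ring
    _ ≤ K * ∑' j : u, ∫⁻ y in closedBall (c j) (r j), F y ∂μ := by
        gcongr with j; exact h j (hut j.2)
    _ = K * ∫⁻ y in ⋃ j ∈ u, closedBall (c j) (r j), F y ∂μ := by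
        rw [lintegral_biUnion hu (fun j _ => measurableSet_closedBall) hud]
    _ ≤ K * ∫⁻ y, F y ∂μ := by
        gcongr K * ?_; exact setLIntegral_le_lintegral _ _

theorem mul_measure_biUnion_closedBall_le [Countable ι]
    (hμ : ∀ x r, μ (closedBall x (4 * r)) ≤ K * μ (closedBall x r)) (t : Set ι)
    (h : ∀ i ∈ t, ℓ * μ (closedBall (c i) (r i)) ≤ ∫⁻ y in closedBall (c i) (r i), F y ∂μ) :
    ℓ * μ (⋃ i ∈ t, closedBall (c i) (r i)) ≤ K * ∫⁻ y, F y ∂μ := by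
  -- Vitali's lemma needs bounded radii: pass to finite subfamilies by continuity from below.
  have hunion : ⋃ i ∈ t, closedBall (c i) (r i) =
      ⋃ s : Finset ι, ⋃ i ∈ t ∩ s, closedBall (c i) (r i) := by
    ext x
    simp only [mem_iUnion, mem_inter_iff, Finset.mem_coe, exists_prop]
    constructor
    · rintro ⟨i, hi, hx⟩
      exact ⟨{i}, i, ⟨hi, Finset.mem_singleton_self i⟩, hx⟩
    · rintro ⟨-, i, ⟨hi, -⟩, hx⟩
      exact ⟨i, hi, hx⟩
  have hmono : Monotone fun s : Finset ι => ⋃ i ∈ t ∩ s, closedBall (c i) (r i) :=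
    fun s s' hs => biUnion_subset_biUnion_left (inter_subset_inter_right _ (Finset.coe_subset.2 hs))
  rw [hunion, hmono.measure_iUnion, ENNReal.mul_iSup]
  exact iSup_le fun s => mul_measure_biUnion_closedBall_le_of_finite hμ
    (s.finite_toSet.inter_of_right t) fun i hi => h i hi.1

theorem two_zpow_mul_tsum_measure_le [Countable ι]
    (hμ : ∀ x r, μ (closedBall x (4 * r)) ≤ K * μ (closedBall x r))
    (hB : ∀ i, μ (closedBall (c i) (r i)) ≠ ⊤) {E : ι → Set α} (hEm : ∀ i, MeasurableSet (E i))
    (hEB : ∀ i, E i ⊆ closedBall (c i) (r i)) (hEd : Pairwise (Disjoint on E)) (k : ℤ) :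
    2 ^ k * ∑' i, {i | 2 ^ (k + 1) < ⨍⁻ y in closedBall (c i) (r i), F y ∂μ}.indicator
        (fun i => μ (E i)) i ≤
      K * ∫⁻ y, {y | 2 ^ k < F y}.indicator F y ∂μ := by
  refine (mul_le_mul_right (tsum_indicator_measure_le_measure_biUnion hEm hEB hEd _) _).trans
    (mul_measure_biUnion_closedBall_le hμ _ fun i hi => ?_)
  refine mul_measure_le_setLIntegral_indicator_lt (hB i)
    (ENNReal.zpow_lt_top two_ne_zero ENNReal.ofNat_ne_top k).ne ?_
  have h2k : (2 : ℝ≥0∞) * 2 ^ k = 2 ^ (k + 1) := by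
    rw [ENNReal.zpow_add two_ne_zero ENNReal.ofNat_ne_top, zpow_one, mul_comm]
  rw [← measure_mul_setLAverage F (hB i), h2k, mul_comm (μ _)]
  exact mul_le_mul_left (le_of_lt hi) _

theorem tsum_sq_setLAverage_mul_measure_le [Countable ι]
    (hμ : ∀ x r, μ (closedBall x (4 * r)) ≤ K * μ (closedBall x r))
    (hB : ∀ i, μ (closedBall (c i) (r i)) ≠ ⊤) {E : ι → Set α} (hEm : ∀ i, MeasurableSet (E i))
    (hEB : ∀ i, E i ⊆ closedBall (c i) (r i)) (hEd : Pairwise (Disjoint on E))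
    (hF : AEMeasurable F μ) :
    ∑' i, (⨍⁻ y in closedBall (c i) (r i), F y ∂μ) ^ 2 * μ (E i) ≤ 32 * K * ∫⁻ y, F y ^ 2 ∂μ := by
  set a : ι → ℝ≥0∞ := fun i => ⨍⁻ y in closedBall (c i) (r i), F y ∂μ
  have hpointwise (y : α) : ∑' k : ℤ, 2 ^ k * {y | 2 ^ k < F y}.indicator F y ≤ 2 * F y ^ 2 := by
    calc ∑' k : ℤ, 2 ^ k * {y | 2 ^ k < F y}.indicator F y
        = F y * ∑' k : ℤ, (if (2 : ℝ≥0∞) ^ k < F y then (2 : ℝ≥0∞) ^ k else 0) := by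
          rw [← ENNReal.tsum_mul_left]
          refine tsum_congr fun k => ?_
          simp only [indicator_apply, mem_ofPred_eq]
          split_ifs <;> ring
      _ ≤ F y * (2 * F y) := by gcongr; exact ENNReal.tsum_ite_two_zpow_lt_le_two_mul _
      _ = 2 * F y ^ 2 := by ring
  calc ∑' i, a i ^ 2 * μ (E i)
      ≤ ∑' i, (16 * ∑' k : ℤ,
          (if (2 : ℝ≥0∞) ^ (k + 1) < a i then ((2 : ℝ≥0∞) ^ k) ^ 2 else 0)) * μ (E i) := by
        gcongr with i; exact ENNReal.sq_le_sixteen_mul_tsum _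
    _ = 16 * ∑' k : ℤ, 2 ^ k * (2 ^ k * ∑' i, {i | 2 ^ (k + 1) < a i}.indicator
          (fun i => μ (E i)) i) := by
        simp_rw [mul_assoc, ← ENNReal.tsum_mul_right, ← ENNReal.tsum_mul_left]
        rw [ENNReal.tsum_comm]
        refine tsum_congr fun k => tsum_congr fun i => ?_
        by_cases h : (2 : ℝ≥0∞) ^ (k + 1) < a i <;> simp [h, sq, mul_assoc]
    _ ≤ 16 * ∑' k : ℤ, 2 ^ k * (K * ∫⁻ y, {y | 2 ^ k < F y}.indicator F y ∂μ) := by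
        gcongr 16 * ?_
        exact ENNReal.tsum_le_tsum fun k =>
          mul_le_mul_right (two_zpow_mul_tsum_measure_le hμ hB hEm hEB hEd k) _
    _ = 16 * K * ∫⁻ y, ∑' k : ℤ, 2 ^ k * {y | 2 ^ k < F y}.indicator F y ∂μ := by
        have htrunc (k : ℤ) : AEMeasurable ({y | 2 ^ k < F y}.indicator F) μ :=
          hF.indicator₀ (nullMeasurableSet_lt aemeasurable_const hF)
        rw [lintegral_tsum fun k => (htrunc k).const_mul _, ← ENNReal.tsum_mul_left,
          ← ENNReal.tsum_mul_left]
        refine tsum_congr fun k => ?_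
        rw [lintegral_const_mul' _ _ (ENNReal.zpow_lt_top two_ne_zero ENNReal.ofNat_ne_top k).ne]
        ring
    _ ≤ 16 * K * ∫⁻ y, 2 * F y ^ 2 ∂μ := by gcongr with y; exact hpointwise y
    _ = 32 * K * ∫⁻ y, F y ^ 2 ∂μ := by
        rw [lintegral_const_mul' _ _ ENNReal.ofNat_ne_top]; ring

theorem tsum_lintegral_mul_lintegral_div_le [ProperSpace α] [IsFiniteMeasureOnCompacts μ]
    [μ.IsOpenPosMeasure] [Countable ι]
    (hμ : ∀ x r, μ (closedBall x (4 * r)) ≤ K * μ (closedBall x r)) {L : ℝ≥0∞}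
    (hL : ∀ x r, μ (closedBall x (5 * r)) ≤ L * μ (closedBall x r)) (hr : ∀ i, 0 < r i)
    {ε : ℝ≥0} (hε : ε ≠ 0) {E : ι → Set α} (hEm : ∀ i, MeasurableSet (E i))
    (hEB : ∀ i, E i ⊆ closedBall (c i) (r i)) (hEd : Pairwise (Disjoint on E))
    (hεE : ∀ i, ε * μ (closedBall (c i) (r i)) ≤ μ (E i)) {G : α → ℝ≥0∞}
    (hF : AEMeasurable F μ) (hG : AEMeasurable G μ) :
    ∑' i, (∫⁻ y in closedBall (c i) (5 * r i), F y ∂μ) *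
        (∫⁻ y in closedBall (c i) (r i), G y ∂μ) / μ (closedBall (c i) (r i)) ≤
      L / ε * (32 * K) * (∫⁻ y, F y ^ 2 ∂μ) ^ (1 / 2 : ℝ) * (∫⁻ y, G y ^ 2 ∂μ) ^ (1 / 2 : ℝ) := by
  set B : ι → Set α := fun i => closedBall (c i) (r i)
  set B₅ : ι → Set α := fun i => closedBall (c i) (5 * r i)
  set a : ι → ℝ≥0∞ := fun i => ⨍⁻ y in B₅ i, F y ∂μ
  set b : ι → ℝ≥0∞ := fun i => ⨍⁻ y in B i, G y ∂μ
  have hBB₅ (i : ι) : B i ⊆ B₅ i := closedBall_subset_closedBall (by linarith [hr i])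
  have hterm (i : ι) : (∫⁻ y in B₅ i, F y ∂μ) * (∫⁻ y in B i, G y ∂μ) / μ (B i) ≤
      L / ε * (a i * b i * μ (E i)) := by
    have hB0 : μ (B i) ≠ 0 := (measure_closedBall_pos μ _ (hr i)).ne'
    have hBtop : μ (B i) ≠ ⊤ := measure_closedBall_lt_top.ne
    have hBE : μ (B i) ≤ μ (E i) / ε := by
      rw [ENNReal.le_div_iff_mul_le (Or.inl (by exact_mod_cast hε)) (Or.inl ENNReal.coe_ne_top),
        mul_comm]
      exact hεE i
    rw [← measure_mul_setLAverage F measure_closedBall_lt_top.ne,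
      ← measure_mul_setLAverage G hBtop]
    calc μ (B₅ i) * a i * (μ (B i) * b i) / μ (B i) = μ (B₅ i) * (a i * b i) := by
          rw [mul_comm (μ (B i)), ← mul_assoc, ENNReal.mul_div_cancel_right hB0 hBtop, mul_assoc]
      _ ≤ L * (μ (E i) / ε) * (a i * b i) := by
          gcongr
          exact (hL _ _).trans (by gcongr)
      _ = L / ε * (a i * b i * μ (E i)) := by
          simp only [div_eq_mul_inv]; ring
  have hcarleson_F : ∑' i, a i ^ 2 * μ (E i) ≤ 32 * K * ∫⁻ y, F y ^ 2 ∂μ :=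
    tsum_sq_setLAverage_mul_measure_le hμ (fun i => measure_closedBall_lt_top.ne) hEm
      (fun i => (hEB i).trans (hBB₅ i)) hEd hF
  have hcarleson_G : ∑' i, b i ^ 2 * μ (E i) ≤ 32 * K * ∫⁻ y, G y ^ 2 ∂μ :=
    tsum_sq_setLAverage_mul_measure_le hμ (fun i => measure_closedBall_lt_top.ne) hEm hEB hEd hG
  calc _ ≤ ∑' i, L / ε * (a i * b i * μ (E i)) := ENNReal.tsum_le_tsum hterm
    _ = L / ε * ∑' i, a i * b i * μ (E i) := ENNReal.tsum_mul_left
    _ ≤ L / ε * ((∑' i, a i ^ 2 * μ (E i)) ^ (1 / 2 : ℝ) *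
          (∑' i, b i ^ 2 * μ (E i)) ^ (1 / 2 : ℝ)) := by
        gcongr; exact ENNReal.tsum_mul_mul_le_rpow_half_mul a b _
    _ ≤ L / ε * (32 * K * ((∫⁻ y, F y ^ 2 ∂μ) ^ (1 / 2 : ℝ) *
          (∫⁻ y, G y ^ 2 ∂μ) ^ (1 / 2 : ℝ))) := by
        gcongr L / ε * ?_; exact ENNReal.rpow_half_mul_rpow_half_le hcarleson_F hcarleson_G
    _ = _ := by ring

end Doubling

theorem volume_closedBall_mul_le {n : ℕ} (x : Fin n → ℝ) {t : ℝ} (ht : 0 < t) (r : ℝ) :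
    volume (closedBall x (t * r)) ≤ ENNReal.ofReal t ^ n * volume (closedBall x r) := by
  rcases lt_or_ge r 0 with hr | hr
  · rw [closedBall_eq_empty.2 (mul_neg_of_pos_of_neg ht hr)]
    simp
  rw [Real.volume_pi_closedBall _ (by positivity), Real.volume_pi_closedBall _ hr, Fintype.card_fin,
    ← ENNReal.ofReal_pow ht.le, ← ENNReal.ofReal_mul (by positivity), ← mul_pow, mul_left_comm]

theorem centeredCube_eq_closedBall {n : ℕ} (c : Fin n → ℝ) {r : ℝ} (hr : 0 ≤ r) :
    centeredCube n c r = closedBall c r := by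
  ext y
  simp [centeredCube, mem_closedBall, dist_pi_le_iff hr, Real.dist_eq]

/-- A sparse family of cubes satisfies the bilinear form bound
`∑_I |I| (|I|⁻¹ ∫_{5I} f)(|I|⁻¹ ∫_I g) ≲ ‖f‖₂ ‖g‖₂`. -/
theorem stmt_8 (n : ℕ) (c0 : ℝ) (hc0 : 0 < c0) :
    ∃ C : ℝ, 0 < C ∧
      ∀ (ι : Type) (_ : Countable ι) (c : ι → Fin n → ℝ) (r : ι → ℝ), (∀ i, 0 < r i) →
        ∀ (E : ι → Set (Fin n → ℝ)), (∀ i, MeasurableSet (E i)) →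
          (∀ i, E i ⊆ centeredCube n (c i) (r i)) →
          (∀ i j, i ≠ j → Disjoint (E i) (E j)) →
          (∀ i, ENNReal.ofReal c0 * volume (centeredCube n (c i) (r i)) ≤ volume (E i)) →
          ∀ (f g : (Fin n → ℝ) → ℝ), (∀ x, 0 ≤ f x) → (∀ x, 0 ≤ g x) →
            MemLp f 2 volume → MemLp g 2 volume →
            (∑' i, (∫⁻ y in centeredCube n (c i) (5 * r i), ENNReal.ofReal (f y)) *
                (∫⁻ y in centeredCube n (c i) (r i), ENNReal.ofReal (g y)) /
                volume (centeredCube n (c i) (r i))) ≤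
              ENNReal.ofReal C * (∫⁻ x, ENNReal.ofReal (f x) ^ 2) ^ ((1 : ℝ) / 2) *
                (∫⁻ x, ENNReal.ofReal (g x) ^ 2) ^ ((1 : ℝ) / 2) := by
  refine ⟨5 ^ n / c0 * (32 * 4 ^ n), by positivity, ?_⟩
  intro ι _ c r hr E hEm hEB hEd hεE f g _ _ hf hg
  have hcube (i : ι) : centeredCube n (c i) (r i) = closedBall (c i) (r i) :=
    centeredCube_eq_closedBall _ (hr i).le
  have hcube₅ (i : ι) : centeredCube n (c i) (5 * r i) = closedBall (c i) (5 * r i) :=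
    centeredCube_eq_closedBall _ (by linarith [hr i])
  have hC : 5 ^ n / ENNReal.ofReal c0 * (32 * 4 ^ n) =
      ENNReal.ofReal (5 ^ n / c0 * (32 * 4 ^ n)) := by
    rw [ENNReal.ofReal_mul (by positivity), ENNReal.ofReal_div_of_pos hc0]
    simp only [ENNReal.ofReal_pow, Nat.ofNat_nonneg, ENNReal.ofReal_ofNat, ENNReal.ofReal_mul]
  simp only [hcube, hcube₅] at hEB hεE ⊢
  rw [← hC]
  refine tsum_lintegral_mul_lintegral_div_le (fun x r => ?_) (fun x r => ?_) hr
    (Real.toNNReal_pos.2 hc0).ne' hEm hEB hEd hεE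
    (ENNReal.measurable_ofReal.comp_aemeasurable hf.1.aemeasurable)
    (ENNReal.measurable_ofReal.comp_aemeasurable hg.1.aemeasurable)
  · simpa using volume_closedBall_mul_le x four_pos r
  · simpa using volume_closedBall_mul_le x (by norm_num : (0 : ℝ) < 5) r
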